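/- arXiv:1808.04685 — 5 statements merged into one kernel-verified Lean document; each statement's English description precedes it below -/
import Mathlib

section
/- Consider Algorithm 1 run with constant step size η > 0 from the zero initialization W⁰ = 0. Then along any trajectory of the algorithm (for any choice of sampled indices and any noise values obeying the injection rule), the number of non-zero updates performed is at most T_k⁰ := (k/(η v_min²))·(η‖v‖₂² + 2)·‖ω*‖₂², where v_min := min_{1≤j≤k} |v_j|. -/
/-!
Perceptron argument with the potential `P(W) = ∑ⱼ sign(vⱼ) ⟪wⱼ, ω*⟫`. In a non-zero update each
firing neuron moves by `η y vⱼ x`, which raises `P` by `η |vⱼ| y ⟪ω*, x⟫ ≥ η |vⱼ|`; hence `P`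
never decreases and gains at least `η v_min`. Meanwhile `∑ⱼ ‖wⱼ‖²` grows by at most
`η (η ‖v‖² + 2)`: no noise is injected into neurons with `y vⱼ < 0`, so they fire exactly when
`⟪wⱼ, x⟫ ≥ 0`, and the cross terms are then bounded by `2 η y f(x; W) < 2 η` because the hinge is
active. After `M` non-zero updates from `W⁰ = 0`, Cauchy–Schwarz gives
`(η v_min M)² ≤ P² ≤ k ‖ω*‖² ∑ⱼ ‖wⱼ‖² ≤ k ‖ω*‖² η (η ‖v‖² + 2) M`.
-/

open scoped RealInnerProductSpace
open Finset

lemma add_mul_card_filter_range_le {f : ℕ → ℝ} {a : ℝ} (p : ℕ → Prop) [DecidablePred p]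
    (h : ∀ t, f t + (if p t then a else 0) ≤ f (t + 1)) (T : ℕ) :
    f 0 + a * #{t ∈ range T | p t} ≤ f T := by
  have hcount : a * #{t ∈ range T | p t} = ∑ t ∈ range T, if p t then a else 0 := by
    rw [← sum_filter, sum_const, nsmul_eq_mul, mul_comm]
  have hgain : ∑ t ∈ range T, (if p t then a else 0) ≤ ∑ t ∈ range T, (f (t + 1) - f t) :=
    sum_le_sum fun t _ => by linarith [h t]
  rw [sum_range_sub] at hgain
  linarith

lemma le_div_sq_of_sq_mul_le {c B M : ℝ} (hc : 0 < c) (hB : 0 ≤ B) (hM : 0 ≤ M)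
    (h : (c * M) ^ 2 ≤ B * M) : M ≤ B / c ^ 2 := by
  rw [le_div_iff₀ (by positivity)]
  rcases hM.eq_or_lt with rfl | hM
  · simpa using hB
  · nlinarith

lemma ite_mul_le_mul_max {a b : ℝ} {p : Prop} [Decidable p] (h : a < 0 → (p ↔ 0 ≤ b)) :
    (if p then a * b else 0) ≤ a * max 0 b := by
  rcases le_or_gt 0 a with ha | ha
  · split_ifs
    · exact mul_le_mul_of_nonneg_left (le_max_right _ _) ha
    · exact mul_nonneg ha (le_max_left _ _)
  · by_cases hb : 0 ≤ b
    · simp [(h ha).mpr hb, max_eq_right hb]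
    · simp [mt (h ha).mp hb, max_eq_left (not_le.mp hb).le]

section

variable {E ι : Type*} [NormedAddCommGroup E] [InnerProductSpace ℝ E] [Fintype ι]

noncomputable def netOutput (v : ι → ℝ) (W : ι → E) (x : E) : ℝ := ∑ l, v l * max 0 ⟪W l, x⟫

noncomputable def algorithm1Step (η : ℝ) (v : ι → ℝ) (x : E) (y : ℝ) (ε : ι → ℝ) (W : ι → E) :
    ι → E :=
  fun j => W j + (η * (if 0 < 1 - y * netOutput v W x then (1 : ℝ) else 0) * y * v j *
    (if 0 ≤ ⟪W j, x⟫ + ε j then (1 : ℝ) else 0)) • x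

/-- An `abbrev`, so that its `Decidable` instance is the one of the unfolded conjunction. -/
abbrev IsNonzeroUpdate (v : ι → ℝ) (W : ι → E) (x : E) (y : ℝ) (ε : ι → ℝ) : Prop :=
  0 < 1 - y * netOutput v W x ∧ ∃ j, 0 ≤ ⟪W j, x⟫ + ε j

noncomputable def signedAlignment (v : ι → ℝ) (W : ι → E) (ω : E) : ℝ :=
  ∑ j, (SignType.sign (v j) : ℝ) * ⟪W j, ω⟫

section Step

variable {η y : ℝ} {v : ι → ℝ} {x : E} {ε : ι → ℝ} {W : ι → E}

lemma algorithm1Step_eq_self (h : ¬IsNonzeroUpdate v W x y ε) :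
    algorithm1Step η v x y ε W = W := by
  funext j
  by_cases hinge : 0 < 1 - y * netOutput v W x
  · have : ¬ 0 ≤ ⟪W j, x⟫ + ε j := fun hj => h ⟨hinge, j, hj⟩
    simp [algorithm1Step, this]
  · simp [algorithm1Step, hinge]

lemma algorithm1Step_apply_of_hinge (hinge : 0 < 1 - y * netOutput v W x) (j : ι) :
    algorithm1Step η v x y ε W j =
      W j + (if 0 ≤ ⟪W j, x⟫ + ε j then η * y * v j else 0) • x := by
  simp only [algorithm1Step, if_pos hinge, mul_one, mul_ite, mul_zero]

lemma signedAlignment_add_le_algorithm1Step {ω : E} {vmin : ℝ}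
    [Decidable (IsNonzeroUpdate v W x y ε)] (hη : 0 ≤ η)
    (hvmin : ∀ j, vmin ≤ |v j|) (hsep : 1 ≤ y * ⟪ω, x⟫) :
    signedAlignment v W ω + (if IsNonzeroUpdate v W x y ε then η * vmin else 0) ≤
      signedAlignment v (algorithm1Step η v x y ε W) ω := by
  split_ifs with hupd
  swap
  · rw [algorithm1Step_eq_self hupd, add_zero]
  obtain ⟨hinge, j₀, hj₀⟩ := hupd
  set gain : ι → ℝ := fun j => if 0 ≤ ⟪W j, x⟫ + ε j then η * |v j| * (y * ⟪ω, x⟫) else 0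
  have hstep : signedAlignment v (algorithm1Step η v x y ε W) ω =
      signedAlignment v W ω + ∑ j, gain j := by
    simp only [signedAlignment, algorithm1Step_apply_of_hinge hinge, ← sum_add_distrib]
    refine sum_congr rfl fun j _ => ?_
    by_cases hj : 0 ≤ ⟪W j, x⟫ + ε j
    · simp only [gain, if_pos hj, inner_add_left, real_inner_smul_left, real_inner_comm x ω,
        ← sign_mul_self (v j)]
      ring
    · simp [gain, hj]
  have hgain_nonneg : ∀ j, 0 ≤ gain j := fun j => by
    unfold gain; split_ifs
    · exact mul_nonneg (mul_nonneg hη (abs_nonneg _)) (by linarith)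
    · exact le_rfl
  have hgain₀ : η * vmin ≤ gain j₀ := by
    simp only [gain, if_pos hj₀]
    have h₁ := mul_le_mul_of_nonneg_left (hvmin j₀) hη
    have h₂ := mul_le_mul_of_nonneg_left hsep (mul_nonneg hη (abs_nonneg (v j₀)))
    linarith
  rw [hstep]
  linarith [single_le_sum (fun j _ => hgain_nonneg j) (mem_univ j₀)]

lemma norm_add_ite_smul_sq_le {w : E} {a : ℝ} {p : Prop} [Decidable p] (hη : 0 ≤ η)
    (hy : |y| ≤ 1) (hx : ‖x‖ ≤ 1) (hp : y * a < 0 → (p ↔ 0 ≤ ⟪w, x⟫)) :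
    ‖w + (if p then η * y * a else 0) • x‖ ^ 2 ≤
      ‖w‖ ^ 2 + 2 * η * (y * a * max 0 ⟪w, x⟫) + η ^ 2 * a ^ 2 := by
  have hcross := mul_le_mul_of_nonneg_left (ite_mul_le_mul_max hp) (by positivity : 0 ≤ 2 * η)
  have hy2 : y ^ 2 ≤ 1 := by nlinarith [abs_nonneg y, sq_abs y]
  have hx2 : ‖x‖ ^ 2 ≤ 1 := by nlinarith [norm_nonneg x]
  split_ifs at hcross ⊢ with h
  · rw [norm_add_sq_real, real_inner_smul_right, norm_smul, mul_pow, Real.norm_eq_abs, sq_abs]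
    have : (η * y * a) ^ 2 * ‖x‖ ^ 2 ≤ η ^ 2 * a ^ 2 := by
      have : (η * y * a) ^ 2 = η ^ 2 * a ^ 2 * y ^ 2 := by ring
      rw [this]
      nlinarith [mul_le_mul_of_nonneg_left hy2 (by positivity : 0 ≤ η ^ 2 * a ^ 2),
        mul_le_mul_of_nonneg_left hx2 (by positivity : 0 ≤ η ^ 2 * a ^ 2 * y ^ 2)]
    nlinarith
  · simp only [zero_smul, add_zero, mul_zero] at hcross ⊢
    nlinarith [sq_nonneg (η * a)]

lemma sum_sq_norm_algorithm1Step_le [Decidable (IsNonzeroUpdate v W x y ε)] (hη : 0 ≤ η)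
    (hy : |y| ≤ 1) (hx : ‖x‖ ≤ 1) (hε : ∀ j, y * v j < 0 → ε j = 0) :
    ∑ j, ‖algorithm1Step η v x y ε W j‖ ^ 2 ≤ ∑ j, ‖W j‖ ^ 2 +
      (if IsNonzeroUpdate v W x y ε then η * (η * ∑ j, v j ^ 2 + 2) else 0) := by
  split_ifs with hupd
  swap
  · rw [algorithm1Step_eq_self hupd, add_zero]
  have hinge := hupd.1
  have hterm : ∀ j, ‖algorithm1Step η v x y ε W j‖ ^ 2 ≤
      ‖W j‖ ^ 2 + 2 * η * (y * v j * max 0 ⟪W j, x⟫) + η ^ 2 * v j ^ 2 := fun j => by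
    rw [algorithm1Step_apply_of_hinge hinge]
    refine norm_add_ite_smul_sq_le hη hy hx fun hneg => ?_
    rw [hε j hneg, add_zero]
  have hsum : ∑ j, (y * v j * max 0 ⟪W j, x⟫) = y * netOutput v W x := by
    simp only [netOutput, mul_sum, mul_assoc]
  calc ∑ j, ‖algorithm1Step η v x y ε W j‖ ^ 2
      ≤ ∑ j, (‖W j‖ ^ 2 + 2 * η * (y * v j * max 0 ⟪W j, x⟫) + η ^ 2 * v j ^ 2) :=
        sum_le_sum fun j _ => hterm j
    _ = ∑ j, ‖W j‖ ^ 2 + 2 * η * (y * netOutput v W x) + η ^ 2 * ∑ j, v j ^ 2 := by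
        rw [sum_add_distrib, sum_add_distrib, ← mul_sum, ← mul_sum, hsum]
    _ ≤ ∑ j, ‖W j‖ ^ 2 + η * (η * ∑ j, v j ^ 2 + 2) := by nlinarith

lemma signedAlignment_sq_le (v : ι → ℝ) (W : ι → E) (ω : E) :
    signedAlignment v W ω ^ 2 ≤ Fintype.card ι * (∑ j, ‖W j‖ ^ 2) * ‖ω‖ ^ 2 := by
  have habs : |signedAlignment v W ω| ≤ (∑ j, ‖W j‖) * ‖ω‖ := by
    rw [signedAlignment, sum_mul]
    refine (abs_sum_le_sum_abs _ _).trans (sum_le_sum fun j _ => ?_)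
    rw [abs_mul]
    have hsign : |(SignType.sign (v j) : ℝ)| ≤ 1 := by
      rcases SignType.sign (v j) with _ | _ | _ <;> simp
    calc |(SignType.sign (v j) : ℝ)| * |⟪W j, ω⟫| ≤ 1 * (‖W j‖ * ‖ω‖) :=
          mul_le_mul hsign (abs_real_inner_le_norm _ _) (abs_nonneg _) zero_le_one
      _ = ‖W j‖ * ‖ω‖ := one_mul _
  calc signedAlignment v W ω ^ 2 ≤ ((∑ j, ‖W j‖) * ‖ω‖) ^ 2 :=
        sq_le_sq' (abs_le.mp habs).1 (abs_le.mp habs).2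
    _ = (∑ j, ‖W j‖) ^ 2 * ‖ω‖ ^ 2 := mul_pow _ _ _
    _ ≤ Fintype.card ι * (∑ j, ‖W j‖ ^ 2) * ‖ω‖ ^ 2 := by
        gcongr
        simpa using sq_sum_le_card_mul_sum_sq (s := univ) (f := fun j => ‖W j‖)

end Step

section Trajectory

variable {η : ℝ} {v : ι → ℝ} {xs : ℕ → E} {ys : ℕ → ℝ} {εs : ℕ → ι → ℝ} {W : ℕ → ι → E}
  [∀ t, Decidable (IsNonzeroUpdate v (W t) (xs t) (ys t) (εs t))]

lemma signedAlignment_trajectory {ω : E} {vmin : ℝ} (hη : 0 ≤ η) (hvmin : ∀ j, vmin ≤ |v j|)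
    (hsep : ∀ t, 1 ≤ ys t * ⟪ω, xs t⟫)
    (hstep : ∀ t, W (t + 1) = algorithm1Step η v (xs t) (ys t) (εs t) (W t)) (T : ℕ) :
    signedAlignment v (W 0) ω +
        η * vmin * #{t ∈ range T | IsNonzeroUpdate v (W t) (xs t) (ys t) (εs t)} ≤
      signedAlignment v (W T) ω :=
  add_mul_card_filter_range_le _
    (fun t => (hstep t).symm ▸ signedAlignment_add_le_algorithm1Step hη hvmin (hsep t)) T

lemma sum_sq_norm_trajectory (hη : 0 ≤ η) (hx : ∀ t, ‖xs t‖ ≤ 1) (hy : ∀ t, |ys t| ≤ 1)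
    (hε : ∀ t j, ys t * v j < 0 → εs t j = 0)
    (hstep : ∀ t, W (t + 1) = algorithm1Step η v (xs t) (ys t) (εs t) (W t)) (T : ℕ) :
    ∑ j, ‖W T j‖ ^ 2 ≤ ∑ j, ‖W 0 j‖ ^ 2 + η * (η * ∑ j, v j ^ 2 + 2) *
      #{t ∈ range T | IsNonzeroUpdate v (W t) (xs t) (ys t) (εs t)} := by
  have hgrowth : ∀ t, -∑ j, ‖W t j‖ ^ 2 +
      (if IsNonzeroUpdate v (W t) (xs t) (ys t) (εs t) then -(η * (η * ∑ j, v j ^ 2 + 2)) else 0)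
      ≤ -∑ j, ‖W (t + 1) j‖ ^ 2 := fun t => by
    have := (hstep t).symm ▸ sum_sq_norm_algorithm1Step_le hη (hy t) (hx t) (hε t)
    split_ifs at this ⊢ <;> linarith
  linarith [add_mul_card_filter_range_le (f := fun t => -∑ j, ‖W t j‖ ^ 2) _ hgrowth T]

theorem card_filter_isNonzeroUpdate_le {ω : E} {vmin : ℝ} (hη : 0 < η) (hvmin_pos : 0 < vmin)
    (hvmin : ∀ j, vmin ≤ |v j|) (hx : ∀ t, ‖xs t‖ ≤ 1) (hy : ∀ t, |ys t| ≤ 1)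
    (hsep : ∀ t, 1 ≤ ys t * ⟪ω, xs t⟫) (hε : ∀ t j, ys t * v j < 0 → εs t j = 0) (hW0 : W 0 = 0)
    (hstep : ∀ t, W (t + 1) = algorithm1Step η v (xs t) (ys t) (εs t) (W t)) (T : ℕ) :
    (#{t ∈ range T | IsNonzeroUpdate v (W t) (xs t) (ys t) (εs t)} : ℝ) ≤
      Fintype.card ι / (η * vmin ^ 2) * ((η * ∑ j, v j ^ 2 + 2) * ‖ω‖ ^ 2) := by
  have hP := signedAlignment_trajectory hη.le hvmin hsep hstep T (ω := ω)
  have hQ := sum_sq_norm_trajectory hη.le hx hy hε hstep T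
  have hP0 : signedAlignment v (W 0) ω = 0 := by simp [signedAlignment, hW0]
  have hQ0 : ∑ j, ‖W 0 j‖ ^ 2 = 0 := by simp [hW0]
  rw [hP0, zero_add] at hP
  rw [hQ0, zero_add] at hQ
  generalize #{t ∈ range T | IsNonzeroUpdate v (W t) (xs t) (ys t) (εs t)} = m at hP hQ ⊢
  set C := η * ∑ j, v j ^ 2 + 2
  have hC : 0 ≤ C := by positivity
  refine (le_div_sq_of_sq_mul_le (B := Fintype.card ι * (η * C) * ‖ω‖ ^ 2)
    (mul_pos hη hvmin_pos) (by positivity) (Nat.cast_nonneg _) ?_).trans_eq (by field_simp)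
  calc (η * vmin * m) ^ 2 ≤ signedAlignment v (W T) ω ^ 2 :=
        pow_le_pow_left₀ (by positivity) hP 2
    _ ≤ Fintype.card ι * (∑ j, ‖W T j‖ ^ 2) * ‖ω‖ ^ 2 := signedAlignment_sq_le v (W T) ω
    _ ≤ Fintype.card ι * (η * C) * ‖ω‖ ^ 2 * m := by
      have := mul_le_mul_of_nonneg_right hQ (by positivity : (0 : ℝ) ≤ Fintype.card ι * ‖ω‖ ^ 2)
      linarith

end Trajectory

end

theorem theorem1_zero_initialization_general
    {d k n : ℕ}
    (x : Fin n → EuclideanSpace ℝ (Fin d)) (y : Fin n → ℝ)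
    (hx : ∀ i, ‖x i‖ ≤ 1) (hy : ∀ i, y i = 1 ∨ y i = -1)
    (ω : EuclideanSpace ℝ (Fin d)) (hsep : ∀ i, 1 ≤ y i * (inner ℝ ω (x i) : ℝ))
    (v : Fin k → ℝ) (hv : ∀ j, v j ≠ 0)
    (vmin : ℝ) (hvmin : IsLeast (Set.range fun j => |v j|) vmin)
    (η : ℝ) (hη : 0 < η)
    (W : ℕ → Fin k → EuclideanSpace ℝ (Fin d)) (hW0 : ∀ j, W 0 j = 0)
    (idx : ℕ → Fin n) (ε : ℕ → Fin k → ℝ)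
    (hε : ∀ t j, y (idx t) * v j < 0 → ε t j = 0)
    (hupd : ∀ t j, W (t + 1) j = W t j +
      (η * (if 0 < 1 - y (idx t) * ∑ l, v l * max 0 (inner ℝ (W t l) (x (idx t)) : ℝ)
              then (1 : ℝ) else 0)
        * y (idx t) * v j *
        (if 0 ≤ (inner ℝ (W t j) (x (idx t)) : ℝ) + ε t j then (1 : ℝ) else 0))
          • x (idx t)) :
    ∀ T : ℕ,
      ((((Finset.range T).filter fun t =>
          (0 < 1 - y (idx t) * ∑ l, v l * max 0 (inner ℝ (W t l) (x (idx t)) : ℝ)) ∧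
          ∃ j, 0 ≤ (inner ℝ (W t j) (x (idx t)) : ℝ) + ε t j).card : ℕ) : ℝ) ≤
        k / (η * vmin ^ 2) * ((η * (∑ j, (v j) ^ 2) + 2) * ‖ω‖ ^ 2) := by
  intro T
  have hvmin_pos : 0 < vmin := by
    obtain ⟨j, rfl⟩ := hvmin.1
    exact abs_pos.mpr (hv j)
  have hy_abs : ∀ i, |y i| ≤ 1 := fun i => by rcases hy i with h | h <;> simp [h]
  have := card_filter_isNonzeroUpdate_le (xs := fun t => x (idx t)) hη hvmin_pos
    (fun j => hvmin.2 ⟨j, rfl⟩) (fun t => hx _) (fun t => hy_abs _) (fun t => hsep _) hε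
    (funext hW0) (fun t => funext (hupd t)) T
  rwa [Fintype.card_fin] at this

/-- Theorem 1 (zero initialization): along any trajectory of Algorithm 1 started from
`W⁰ = 0` — for any choice of sampled indices and any noise values obeying the injection
rule — the number of non-zero updates is at most
`T_k⁰ = (k/(η v_min²)) (η ‖v‖₂² + 2) ‖ω*‖₂²`. -/
theorem theorem1_zero_initialization
    {d k n : ℕ}
    (x : Fin n → EuclideanSpace ℝ (Fin d)) (y : Fin n → ℝ)
    (hx : ∀ i, ‖x i‖ ≤ 1) (hy : ∀ i, y i = 1 ∨ y i = -1)
    (ω : EuclideanSpace ℝ (Fin d)) (hsep : ∀ i, 1 ≤ y i * (inner ℝ ω (x i) : ℝ))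
    (v : Fin k → ℝ) (hv : ∀ j, v j ≠ 0) (hvpos : ∃ j, 0 < v j) (hvneg : ∃ j, v j < 0)
    (vmin : ℝ) (hvmin : IsLeast (Set.range fun j => |v j|) vmin)
    (η : ℝ) (hη : 0 < η)
    (W : ℕ → Fin k → EuclideanSpace ℝ (Fin d)) (hW0 : ∀ j, W 0 j = 0)
    (idx : ℕ → Fin n) (ε : ℕ → Fin k → ℝ)
    (hε : ∀ t j, y (idx t) * v j < 0 → ε t j = 0)
    (hupd : ∀ t j, W (t + 1) j = W t j +
      (η * (if 0 < 1 - y (idx t) * ∑ l, v l * max 0 (inner ℝ (W t l) (x (idx t)) : ℝ)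
              then (1 : ℝ) else 0)
        * y (idx t) * v j *
        (if 0 ≤ (inner ℝ (W t j) (x (idx t)) : ℝ) + ε t j then (1 : ℝ) else 0))
          • x (idx t)) :
    ∀ T : ℕ,
      ((((Finset.range T).filter fun t =>
          (0 < 1 - y (idx t) * ∑ l, v l * max 0 (inner ℝ (W t l) (x (idx t)) : ℝ)) ∧
          ∃ j, 0 ≤ (inner ℝ (W t j) (x (idx t)) : ℝ) + ε t j).card : ℕ) : ℝ) ≤
        k / (η * vmin ^ 2) * ((η * (∑ j, (v j) ^ 2) + 2) * ‖ω‖ ^ 2) :=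
  theorem1_zero_initialization_general x y hx hy ω hsep v hv vmin hvmin η hη W hW0 idx ε hε hupd
end

section
/- Lower bound on the number of updates (Theorem 2, deterministic core): Fix d ≥ 1, η > 0, v ∈ ℝ^k, and let e_1, …, e_d be the canonical basis of ℝ^d. Consider the linearly separable dataset S₁ = {(e_1, +1), …, (e_d, +1)} (separated by the all-ones vector ω* with margin 1, and ‖ω*‖₂² = d). Let p ≥ 1 be an integer, let (i_1, …, i_{dp}) be a sequence in {1, …, d} in which each index appears exactly p times, let δ_{j,t} ∈ {0,1} be arbitrary, and define w_j = η v_j Σ_{t=1}^{dp} δ_{j,t} e_{i_t} for j = 1, …, k (the form of any iterate of Algorithm 1 from W⁰ = 0 after dp iterations with deterministic cycling). If for some s ∈ {1, …, d} the network output satisfies Σ_{j=1}^k v_j max(0, ⟨w_j, e_s⟩) ≥ 1 (as required at any global minimum of L_{S₁}), then p ≥ 1/(η‖v‖₂²); consequently the number of iterations dp is at least d/(η‖v‖₂²) = ‖ω*‖₂²/(η‖v‖₂²). -/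
/-! Every row `w_j` is `η v_j` times a nonnegative combination of basis vectors, so its
coordinate at `e_s` is `η v_j` times the total weight that the `p` visits of `s` put on it,
which lies in `[0, p]`. Hence each neuron contributes at most `η v_j² p` to the output at
`e_s`, the output is at most `η ‖v‖₂² p`, and an output of at least `1` forces
`p ≥ 1/(η ‖v‖₂²)`. -/

open Finset

namespace EuclideanSpace

lemma norm_sq_eq_card_of_forall_eq_one {ι : Type*} [Fintype ι] {ω : EuclideanSpace ℝ ι}
    (hω : ∀ l, ω l = 1) : ‖ω‖ ^ 2 = Fintype.card ι := by
  simp [norm_sq_eq, hω]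

lemma real_inner_single_one_right {ι : Type*} [Fintype ι] [DecidableEq ι]
    (x : EuclideanSpace ℝ ι) (s : ι) : inner ℝ x (single s (1 : ℝ)) = x s := by
  simp [inner_single_right]

lemma sum_smul_single_one_apply {ι τ : Type*} [DecidableEq ι] [Fintype τ] (δ : τ → ℝ)
    (i : τ → ι) (s : ι) : (∑ t, δ t • single (i t) (1 : ℝ)) s = ∑ t with i t = s, δ t := by
  simp [WithLp.ofLp_sum, Pi.single_apply, sum_filter, eq_comm]

end EuclideanSpace

lemma sum_filter_mem_Icc_card {τ : Type*} [Fintype τ] {δ : τ → ℝ}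
    (hδ : ∀ t, δ t ∈ Set.Icc 0 1) (q : τ → Prop) [DecidablePred q] :
    ∑ t with q t, δ t ∈ Set.Icc 0 (#{t | q t} : ℝ) := by
  refine ⟨sum_nonneg fun t _ => (hδ t).1, ?_⟩
  simpa using sum_le_card_nsmul _ δ 1 fun t _ => (hδ t).2

lemma mul_max_zero_mul_le {η v a c : ℝ} (hη : 0 ≤ η) (ha : a ∈ Set.Icc 0 c) :
    v * max 0 (η * v * a) ≤ η * v ^ 2 * c := by
  have hc : η * v ^ 2 * a ≤ η * v ^ 2 * c := by gcongr; exact ha.2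
  rcases le_total (η * v * a) 0 with h | h
  · rw [max_eq_left h]
    have : 0 ≤ η * v ^ 2 * a := mul_nonneg (by positivity) ha.1
    linarith
  · rw [max_eq_right h]
    linarith

lemma sum_mul_max_zero_inner_smul_le {E κ : Type*} [NormedAddCommGroup E] [InnerProductSpace ℝ E]
    [Fintype κ] {η c : ℝ} (hη : 0 ≤ η) (v : κ → ℝ) {u : κ → E} {x : E}
    (hu : ∀ j, inner ℝ (u j) x ∈ Set.Icc 0 c) :
    ∑ j, v j * max 0 (inner ℝ ((η * v j) • u j) x) ≤ η * (∑ j, v j ^ 2) * c := by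
  calc ∑ j, v j * max 0 (inner ℝ ((η * v j) • u j) x)
      ≤ ∑ j, η * v j ^ 2 * c := by
        refine sum_le_sum fun j _ => ?_
        rw [real_inner_smul_left]
        exact mul_max_zero_mul_le hη (hu j)
    _ = η * (∑ j, v j ^ 2) * c := by rw [mul_sum, sum_mul]

lemma one_div_le_of_one_le_mul {a b : ℝ} (hb : 0 ≤ b) (h : 1 ≤ a * b) : 1 / a ≤ b := by
  rcases le_or_gt a 0 with ha | ha
  · exact (one_div_nonpos.2 ha).trans hb
  · exact div_le_of_le_mul₀ ha.le hb (by linarith [mul_comm a b])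

theorem lower_bound_on_updates_general
    {d k : ℕ} (η : ℝ) (hη : 0 < η) (v : Fin k → ℝ)
    (e : Fin d → EuclideanSpace ℝ (Fin d)) (he : ∀ s, e s = EuclideanSpace.single s 1)
    (ω : EuclideanSpace ℝ (Fin d)) (hω : ∀ l, ω l = 1)
    (p : ℕ)
    (i : Fin (d * p) → Fin d)
    (hi : ∀ s, (Finset.univ.filter fun t => i t = s).card = p)
    (δ : Fin k → Fin (d * p) → ℝ) (hδ : ∀ j t, δ j t = 0 ∨ δ j t = 1)
    (w : Fin k → EuclideanSpace ℝ (Fin d))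
    (hw : ∀ j, w j = (η * v j) • ∑ t, δ j t • e (i t))
    (s : Fin d) (hout : 1 ≤ ∑ j, v j * max 0 (inner ℝ (w j) (e s) : ℝ)) :
    (∀ s' : Fin d, 1 ≤ (1 : ℝ) * (inner ℝ ω (e s') : ℝ)) ∧ ‖ω‖ ^ 2 = (d : ℝ) ∧
      (1 / (η * ∑ j, (v j) ^ 2) ≤ (p : ℝ)) ∧
      ((d : ℝ) / (η * ∑ j, (v j) ^ 2) ≤ ((d * p : ℕ) : ℝ)) := by
  simp only [he] at hw hout ⊢
  have hvisits : ∀ j, inner ℝ (∑ t, δ j t • EuclideanSpace.single (i t) (1 : ℝ))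
      (EuclideanSpace.single s 1) ∈ Set.Icc 0 (p : ℝ) := fun j => by
    rw [EuclideanSpace.real_inner_single_one_right, EuclideanSpace.sum_smul_single_one_apply]
    have hδ01 : ∀ t, δ j t ∈ Set.Icc 0 1 := fun t => by rcases hδ j t with h | h <;> simp [h]
    simpa only [hi s] using sum_filter_mem_Icc_card hδ01 (i · = s)
  have hp : 1 / (η * ∑ j, v j ^ 2) ≤ p := by
    refine one_div_le_of_one_le_mul p.cast_nonneg (hout.trans ?_)
    simpa only [hw] using sum_mul_max_zero_inner_smul_le hη.le v hvisits
  refine ⟨fun s' => by simp [EuclideanSpace.real_inner_single_one_right, hω],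
    by simp [EuclideanSpace.norm_sq_eq_card_of_forall_eq_one hω], hp, ?_⟩
  calc (d : ℝ) / (η * ∑ j, v j ^ 2) = d * (1 / (η * ∑ j, v j ^ 2)) := by ring
    _ ≤ d * p := by gcongr
    _ = ((d * p : ℕ) : ℝ) := by push_cast; ring

/-- Theorem 2 (lower bound, deterministic core): on the dataset `{(e_1,+1),…,(e_d,+1)}`
(separated with margin 1 by the all-ones vector `ω*`, which satisfies `‖ω*‖₂² = d`),
any iterate of Algorithm 1 started from `W⁰ = 0` after `d p` iterations of deterministic
cycling has rows of the form `w_j = η v_j ∑_t δ_{j,t} e_{i_t}`; if its network output on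
some basis vector is at least `1`, then `p ≥ 1/(η ‖v‖₂²)`, hence the number of iterations
`d p` is at least `d/(η ‖v‖₂²) = ‖ω*‖₂²/(η ‖v‖₂²)`. -/
theorem lower_bound_on_updates
    {d k : ℕ} (hd : 1 ≤ d) (η : ℝ) (hη : 0 < η) (v : Fin k → ℝ)
    (e : Fin d → EuclideanSpace ℝ (Fin d)) (he : ∀ s, e s = EuclideanSpace.single s 1)
    (ω : EuclideanSpace ℝ (Fin d)) (hω : ∀ l, ω l = 1)
    (p : ℕ) (hp : 1 ≤ p)
    (i : Fin (d * p) → Fin d)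
    (hi : ∀ s, (Finset.univ.filter fun t => i t = s).card = p)
    (δ : Fin k → Fin (d * p) → ℝ) (hδ : ∀ j t, δ j t = 0 ∨ δ j t = 1)
    (w : Fin k → EuclideanSpace ℝ (Fin d))
    (hw : ∀ j, w j = (η * v j) • ∑ t, δ j t • e (i t))
    (s : Fin d) (hout : 1 ≤ ∑ j, v j * max 0 (inner ℝ (w j) (e s) : ℝ)) :
    (∀ s' : Fin d, 1 ≤ (1 : ℝ) * (inner ℝ ω (e s') : ℝ)) ∧ ‖ω‖ ^ 2 = (d : ℝ) ∧
      (1 / (η * ∑ j, (v j) ^ 2) ≤ (p : ℝ)) ∧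
      ((d : ℝ) / (η * ∑ j, (v j) ^ 2) ≤ ((d * p : ℕ) : ℝ)) :=
  lower_bound_on_updates_general η hη v e he ω hω p i hi δ hδ w hw s hout
end

section
/- One-step alignment growth bound for a non-zero update: Let v ∈ ℝ^k have all entries nonzero, set v_min = min_j |v_j|, and let Ω* ∈ ℝ^{k×d} be the matrix whose j-th row equals (sgn(v_j)/v_min)·ω*. Let (x, y) be a datum with y⟨ω*, x⟩ ≥ 1, let ε ∈ ℝ^k be any noise vector, and suppose at least one index j satisfies ⟨w_j, x⟩ + ε_j ≥ 0. Define w_j⁺ = w_j + η y v_j · 1{⟨w_j, x⟩ + ε_j ≥ 0} · x for each j. Then ⟨W⁺, Ω*⟩_F ≥ ⟨W, Ω*⟩_F + η, where ⟨·,·⟩_F denotes the Frobenius (entrywise) inner product. -/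
/-! Row `j` moves by `η y v_j 1{…} x`, which raises its inner product with the row
`(sgn v_j / v_min) ω*` by `η 1{…} (|v_j| / v_min) (y ⟪ω*, x⟫)`. Both factors in parentheses are
at least `1`, so every row gains at least `η 1{…} ≥ 0`, and the active row gains at least `η`. -/

open Finset RealInnerProductSpace

lemma mul_ite_pos_one_neg_one (a : ℝ) : a * (if 0 < a then 1 else -1) = |a| := by
  rcases lt_or_ge 0 a with h | h
  · simp [h, abs_of_pos h]
  · simp [not_lt.mpr h, abs_of_nonpos h]

section Row

variable {E : Type*} [NormedAddCommGroup E] [InnerProductSpace ℝ E]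

lemma inner_add_smul_smul_sub (w x ω : E) (c s : ℝ) :
    ⟪w + c • x, s • ω⟫ - ⟪w, s • ω⟫ = c * s * ⟪ω, x⟫ := by
  simp only [inner_add_left, real_inner_smul_left, real_inner_smul_right, real_inner_comm x ω]
  ring

lemma mul_le_inner_add_smul_sign_smul_sub {η y a t vmin : ℝ} (hη : 0 ≤ η) (ht : 0 ≤ t)
    (hvmin : 0 < vmin) (hle : vmin ≤ |a|) {w x ω : E} (hsep : 1 ≤ y * ⟪ω, x⟫) :
    η * t ≤ ⟪w + (η * y * a * t) • x, ((if 0 < a then 1 else -1) / vmin) • ω⟫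
      - ⟪w, ((if 0 < a then 1 else -1) / vmin) • ω⟫ := by
  have hscale : 1 ≤ |a| / vmin := (one_le_div hvmin).mpr hle
  have hgain : 1 ≤ |a| / vmin * (y * ⟪ω, x⟫) := one_le_mul_of_one_le_of_one_le hscale hsep
  calc η * t ≤ η * t * (|a| / vmin * (y * ⟪ω, x⟫)) :=
        le_mul_of_one_le_right (mul_nonneg hη ht) hgain
    _ = _ := by
        rw [inner_add_smul_smul_sub, ← mul_ite_pos_one_neg_one a]
        ring

end Row

/-- One-step alignment growth bound for a non-zero update of Algorithm 1: the Frobenius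
inner product of the iterate with the reference matrix `Ω*` (whose `j`-th row is
`(sgn(v_j)/v_min) ω*`) increases by at least `η` at every non-zero update. -/
theorem one_step_alignment_growth_bound
    {d k : ℕ} (η : ℝ) (hη : 0 < η)
    (v : Fin k → ℝ) (hv : ∀ j, v j ≠ 0)
    (vmin : ℝ) (hvmin : IsLeast (Set.range fun j => |v j|) vmin)
    (ω : EuclideanSpace ℝ (Fin d))
    (Ω : Fin k → EuclideanSpace ℝ (Fin d))
    (hΩ : ∀ j, Ω j = (((if 0 < v j then (1 : ℝ) else -1)) / vmin) • ω)
    (w wplus : Fin k → EuclideanSpace ℝ (Fin d))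
    (x : EuclideanSpace ℝ (Fin d)) (y : ℝ) (hsep : 1 ≤ y * (inner ℝ ω x : ℝ))
    (ε : Fin k → ℝ) (hnz : ∃ j, 0 ≤ (inner ℝ (w j) x : ℝ) + ε j)
    (hupd : ∀ j, wplus j = w j +
      (η * y * v j * (if 0 ≤ (inner ℝ (w j) x : ℝ) + ε j then (1 : ℝ) else 0)) • x) :
    ∑ j, (inner ℝ (w j) (Ω j) : ℝ) + η ≤ ∑ j, (inner ℝ (wplus j) (Ω j) : ℝ) := by
  obtain ⟨j₀, hj₀⟩ := hnz
  obtain ⟨⟨jmin, hjmin⟩, hvmin_le⟩ := hvmin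
  have hvmin_pos : 0 < vmin := hjmin ▸ abs_pos.mpr (hv jmin)
  set active : Fin k → ℝ := fun j => if 0 ≤ ⟪w j, x⟫ + ε j then 1 else 0
  have row_gain (j : Fin k) : η * active j ≤ ⟪wplus j, Ω j⟫ - ⟪w j, Ω j⟫ := by
    rw [hupd j, hΩ j]
    exact mul_le_inner_add_smul_sign_smul_sub hη.le (by positivity) hvmin_pos
      (hvmin_le ⟨j, rfl⟩) hsep
  have active_row : η = η * active j₀ := by simp [active, hj₀]
  have total_gain : η ≤ ∑ j, (⟪wplus j, Ω j⟫ - ⟪w j, Ω j⟫) :=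
    active_row.le.trans <| (single_le_sum (fun j _ => by positivity) (mem_univ j₀)).trans
      (sum_le_sum fun j _ => row_gain j)
  rw [sum_sub_distrib] at total_gain
  linarith
end

section
/- Gaussian escape probability bound (core of Proposition 1): Let N be a finite index set, γ > 0 and w_max > 0. Let w_j ∈ ℝ^d with ‖w_j‖₂ ≤ w_max for all j ∈ N, let x ∈ ℝ^d with ‖x‖₂ ≤ 1, and let (ε_j)_{j∈N} be independent random variables each distributed N(0, γ²). Then the probability that ⟨w_j, x⟩ + ε_j < 0 simultaneously for all j ∈ N is at most [Φ(w_max/γ)]^{|N|}, where Φ is the cumulative distribution function of the standard Gaussian distribution N(0,1). -/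
open MeasureTheory ProbabilityTheory Real

/-!
Each event `⟨w_j, x⟩ + ε_j < 0` is `ε_j / γ < -⟨w_j, x⟩ / γ`, and Cauchy–Schwarz bounds the
threshold by `w_max / γ`; since `ε_j / γ` is standard Gaussian, each event has probability at
most `Φ(w_max / γ)`, and independence multiplies these bounds.
-/

lemma neg_inner_le_of_norm_le {E : Type*} [NormedAddCommGroup E] [InnerProductSpace ℝ E]
    {w x : E} {a : ℝ} (hw : ‖w‖ ≤ a) (hx : ‖x‖ ≤ 1) : -inner ℝ w x ≤ a :=
  calc -inner ℝ w x ≤ ‖w‖ * ‖x‖ := (neg_le_abs _).trans (abs_real_inner_le_norm w x)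
    _ ≤ a * 1 := mul_le_mul hw hx (norm_nonneg x) ((norm_nonneg w).trans hw)
    _ = a := mul_one a

lemma gaussianReal_Iic_eq_ofReal_integral (z : ℝ) :
    gaussianReal 0 1 (Set.Iic z) =
      ENNReal.ofReal ((1 / √(2 * π)) * ∫ s in Set.Iic z, exp (-(s ^ 2) / 2)) := by
  rw [gaussianReal_apply_eq_integral 0 one_ne_zero, ← integral_const_mul]
  congr 1
  refine setIntegral_congr_fun measurableSet_Iic fun s _ => ?_
  simp [gaussianPDFReal, neg_div, one_div]

lemma gaussianReal_eq_map_const_mul (γ : ℝ) :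
    gaussianReal 0 (γ ^ 2).toNNReal = (gaussianReal 0 1).map (γ * ·) := by
  rw [gaussianReal_map_const_mul, mul_zero, mul_one]
  congr
  ext
  simp [Real.coe_toNNReal _ (sq_nonneg γ)]

lemma gaussianReal_Iio_le_Iic_div {γ c t : ℝ} (hγ : 0 < γ) (hct : c ≤ t) :
    gaussianReal 0 (γ ^ 2).toNNReal (Set.Iio c) ≤ gaussianReal 0 1 (Set.Iic (t / γ)) := by
  rw [gaussianReal_eq_map_const_mul, Measure.map_apply (measurable_const_mul γ) measurableSet_Iio]
  refine measure_mono fun u (hu : γ * u < c) => ?_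
  rw [Set.mem_Iic, le_div_iff₀ hγ]
  linarith

lemma ProbabilityTheory.iIndepFun.measure_iInter_preimage_le_pow {Ω ι : Type*}
    [MeasurableSpace Ω] [Fintype ι]
    {β : ι → Type*} [∀ j, MeasurableSpace (β j)] {μ : Measure Ω} {f : ∀ j, Ω → β j}
    (hf : iIndepFun f μ) {s : ∀ j, Set (β j)} (hs : ∀ j, MeasurableSet (s j))
    {p : ENNReal} (hp : ∀ j, μ (f j ⁻¹' s j) ≤ p) :
    μ (⋂ j, f j ⁻¹' s j) ≤ p ^ Fintype.card ι := by
  rw [hf.meas_iInter fun j => ⟨s j, hs j, rfl⟩, ← Finset.card_univ, ← Finset.prod_const]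
  exact Finset.prod_le_prod' fun j _ => hp j

theorem gaussian_escape_probability_general
    {d : ℕ} {ι : Type*} [Fintype ι]
    {Ω : Type*} [MeasureSpace Ω]
    (γ wmax : ℝ) (hγ : 0 < γ)
    (w : ι → EuclideanSpace ℝ (Fin d)) (hw : ∀ j, ‖w j‖ ≤ wmax)
    (x : EuclideanSpace ℝ (Fin d)) (hx : ‖x‖ ≤ 1)
    (ε : ι → Ω → ℝ)
    (hindep : iIndepFun ε ℙ)
    (hlaw : ∀ j, Measure.map (ε j) ℙ = gaussianReal 0 (Real.toNNReal (γ ^ 2)))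
    (Φ : ℝ → ℝ)
    (hΦ : ∀ z, Φ z = (1 / Real.sqrt (2 * Real.pi)) *
      ∫ s in Set.Iic z, Real.exp (-(s ^ 2) / 2)) :
    (ℙ {a : Ω | ∀ j, (inner ℝ (w j) x : ℝ) + ε j a < 0}).toReal ≤
      Φ (wmax / γ) ^ Fintype.card ι := by
  have hevent : {a : Ω | ∀ j, (inner ℝ (w j) x : ℝ) + ε j a < 0} =
      ⋂ j, ε j ⁻¹' Set.Iio (-inner ℝ (w j) x) := by
    ext a
    simp only [Set.mem_ofPred_eq, Set.mem_iInter, Set.mem_preimage, Set.mem_Iio,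
      lt_neg_iff_add_neg']
  have hstep : ∀ j, ℙ (ε j ⁻¹' Set.Iio (-inner ℝ (w j) x)) ≤ ENNReal.ofReal (Φ (wmax / γ)) := by
    intro j
    -- `Measure.map` of a function that is not a.e.-measurable is `0`, so the law forces it.
    have hε : AEMeasurable (ε j) ℙ :=
      .of_map_ne_zero (by rw [hlaw j]; exact IsProbabilityMeasure.ne_zero _)
    rw [← Measure.map_apply_of_aemeasurable hε measurableSet_Iio, hlaw j, hΦ,
      ← gaussianReal_Iic_eq_ofReal_integral]
    exact gaussianReal_Iio_le_Iic_div hγ (neg_inner_le_of_norm_le (hw j) hx)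
  have hΦ_nonneg : 0 ≤ Φ (wmax / γ) := by
    rw [hΦ]
    exact mul_nonneg (by positivity) (integral_nonneg fun s => (exp_pos _).le)
  rw [hevent, ← ENNReal.toReal_ofReal hΦ_nonneg, ← ENNReal.toReal_pow]
  exact ENNReal.toReal_mono (by simp)
    (hindep.measure_iInter_preimage_le_pow (fun _ => measurableSet_Iio) hstep)

/-- Gaussian escape probability bound (core of Proposition 1): if the rows `w_j` have norm
at most `w_max`, `‖x‖₂ ≤ 1`, and the `ε_j` are i.i.d. `N(0, γ²)` noises, then the
probability that all perturbed pre-activations `⟨w_j, x⟩ + ε_j` are simultaneously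
negative is at most `Φ(w_max/γ)^{|N|}`, with `Φ` the standard Gaussian CDF. -/
theorem gaussian_escape_probability
    {d : ℕ} {ι : Type*} [Fintype ι]
    {Ω : Type*} [MeasureSpace Ω] [IsProbabilityMeasure (ℙ : Measure Ω)]
    (γ wmax : ℝ) (hγ : 0 < γ) (hwmax : 0 < wmax)
    (w : ι → EuclideanSpace ℝ (Fin d)) (hw : ∀ j, ‖w j‖ ≤ wmax)
    (x : EuclideanSpace ℝ (Fin d)) (hx : ‖x‖ ≤ 1)
    (ε : ι → Ω → ℝ) (hmeas : ∀ j, Measurable (ε j))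
    (hindep : iIndepFun ε ℙ)
    (hlaw : ∀ j, Measure.map (ε j) ℙ = gaussianReal 0 (Real.toNNReal (γ ^ 2)))
    (Φ : ℝ → ℝ)
    (hΦ : ∀ z, Φ z = (1 / Real.sqrt (2 * Real.pi)) *
      ∫ s in Set.Iic z, Real.exp (-(s ^ 2) / 2)) :
    (ℙ {a : Ω | ∀ j, (inner ℝ (w j) x : ℝ) + ε j a < 0}).toReal ≤
      Φ (wmax / γ) ^ Fintype.card ι :=
  gaussian_escape_probability_general γ wmax hγ w hw x hx ε hindep hlaw Φ hΦ
end

section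
/- Proposition 2(i) (non-convexity of the loss): There exist an input dimension d, a number of neurons k ≥ 2, a fixed second-layer vector v ∈ ℝ^k with at least one positive and at least one negative entry, and a linearly separable training set S = {(x_i, y_i)}_{i=1}^n with ‖x_i‖₂ ≤ 1 and y_i ∈ {−1, +1}, such that the function W ↦ L_S(W) on ℝ^{k×d} is not convex. -/
open RealInnerProductSpace

section

variable {E : Type*} [NormedAddCommGroup E] [InnerProductSpace ℝ E]

noncomputable def reluNet {k : ℕ} (v : Fin k → ℝ) (W : Fin k → E) (z : E) : ℝ :=
  ∑ j, v j * max 0 ⟪W j, z⟫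

noncomputable def hingeRisk {k n : ℕ} (v : Fin k → ℝ) (x : Fin n → E) (y : Fin n → ℝ)
    (W : Fin k → E) : ℝ :=
  (1 / n : ℝ) * ∑ i, max 0 (1 - y i * reluNet v W (x i))

lemma reluNet_one_neg_one (W : Fin 2 → E) (z : E) :
    reluNet ![1, -1] W z = max 0 ⟪W 0, z⟫ - max 0 ⟪W 1, z⟫ := by
  simp [reluNet, Fin.sum_univ_two, sub_eq_add_neg]

lemma hingeRisk_single_positive {k : ℕ} (v : Fin k → ℝ) (u : E) (W : Fin k → E) :
    hingeRisk v (fun _ : Fin 1 => u) (fun _ => 1) W = max 0 (1 - reluNet v W u) := by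
  simp [hingeRisk]

/-- The loss is `1` at `(-u, -u)` and at the midpoint `(0, -u)`, but `0` at `(u, -u)`. -/
lemma not_convexOn_hingeRisk_one_neg_one {u : E} (hu : ‖u‖ = 1) :
    ¬ ConvexOn ℝ Set.univ (hingeRisk ![1, -1] (fun _ : Fin 1 => u) (fun _ => 1)) := by
  intro hconv
  have hmid : (1 / 2 : ℝ) • ![-u, -u] + (1 / 2 : ℝ) • ![u, -u] = ![0, -u] := by
    ext j : 1
    fin_cases j
    · simp
    · simp only [Fin.mk_one, Pi.add_apply, Pi.smul_apply, Matrix.cons_val_one,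
        Matrix.cons_val_zero]
      module
  have key := hconv.2 (Set.mem_univ ![-u, -u]) (Set.mem_univ ![u, -u])
    (by norm_num : (0 : ℝ) ≤ 1 / 2) (by norm_num : (0 : ℝ) ≤ 1 / 2) (by norm_num)
  rw [hmid] at key
  norm_num [hingeRisk_single_positive, reluNet_one_neg_one, inner_neg_left, hu] at key

end

/-- Proposition 2(i): there exists an instance — an input dimension `d`, a network with
`k ≥ 2` hidden neurons, a fixed second-layer vector `v` with at least one positive and at
least one negative entry, and a linearly separable training set with `‖x_i‖₂ ≤ 1` and
labels in `{−1,+1}` — on which the empirical hinge loss `W ↦ L_S(W)` is not convex. -/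
theorem hinge_loss_nonconvex :
    ∃ (d k n : ℕ) (v : Fin k → ℝ) (x : Fin n → EuclideanSpace ℝ (Fin d))
      (y : Fin n → ℝ) (ω : EuclideanSpace ℝ (Fin d)),
      2 ≤ k ∧ (∃ j, 0 < v j) ∧ (∃ j, v j < 0) ∧
      (∀ i, ‖x i‖ ≤ 1) ∧ (∀ i, y i = 1 ∨ y i = -1) ∧
      (∀ i, 1 ≤ y i * (inner ℝ ω (x i) : ℝ)) ∧
      ¬ ConvexOn ℝ Set.univ (fun W : Fin k → EuclideanSpace ℝ (Fin d) =>
          (1 / n : ℝ) *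
            ∑ i, max 0 (1 - y i * ∑ j, v j * max 0 (inner ℝ (W j) (x i) : ℝ))) := by
  obtain ⟨u, hu⟩ : ∃ u : EuclideanSpace ℝ (Fin 1), ‖u‖ = 1 :=
    ⟨EuclideanSpace.single 0 1, by simp⟩
  have huu : ⟪u, u⟫ = 1 := by rw [real_inner_self_eq_norm_sq, hu, one_pow]
  exact ⟨1, 2, 1, ![1, -1], fun _ => u, fun _ => 1, u, le_rfl, ⟨0, by simp⟩, ⟨1, by simp⟩,
    fun _ => hu.le, fun _ => Or.inl rfl, fun _ => by rw [huu, one_mul],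
    not_convexOn_hingeRisk_one_neg_one hu⟩
end
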